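/- arXiv:2406.16760 — 4 statements merged into one kernel-verified Lean document; each statement's English description precedes it below -/
import Mathlib

section
/- Let V and W be finite-dimensional complex vector spaces and let U be a linear subspace of Hom(V, W) such that every nonzero element of U is an injective linear map. Then dim U ≤ dim W − dim V + 1. -/
/-!
Choosing bases, `(u, v) ↦ u v` becomes `n = dim W` bilinear forms `f₁, …, fₙ` in the coordinates
`x` of `U` and `y` of `V` (`k = dim U`, `m = dim V`), with no common zero outside `x = 0` or
`y = 0`. By the Nullstellensatz some power of every `xᵢ yⱼ` lies in the ideal `I = (f₁, …, fₙ)`,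
so every polynomial of bidegree `(d, d)` with `d ≥ D` lies in `I`. Splitting off one `f` at a time,
the polynomials of bidegree `(D + E, D + E)` are spanned by the products of a monomial of degree
`E` in the `f`'s with one of bidegree `(D, D)`. Comparing dimensions, `E ^ (k - 1 + m - 1)` is
bounded by a constant times `E ^ (n - 1)`, hence `k + m ≤ n + 1`.
-/

open MvPolynomial Finset Module
open scoped Pointwise

namespace Nat

theorem pow_le_factorial_mul_choose (a d : ℕ) : (d + 1) ^ a ≤ a ! * (a + d).choose d := by
  rw [← choose_symm_add, ← descFactorial_eq_factorial_mul_choose]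
  convert pow_sub_le_descFactorial (a + d) a using 2
  omega

theorem choose_add_le_mul_pow (c n : ℕ) : (c + n).choose n ≤ (c + 1) ^ c * (n + 1) ^ c := by
  rw [← choose_symm_add, ← mul_pow]
  exact (choose_le_pow _ _).trans (Nat.pow_le_pow_left (by nlinarith) _)

theorem le_of_forall_pow_le_mul_pow {a b C : ℕ} (h : ∀ n : ℕ, (n + 1) ^ a ≤ C * (n + 1) ^ b) :
    a ≤ b := by
  by_contra! hba
  have hpow : (C + 1) ^ (b + 1) ≤ (C + 1) ^ a := Nat.pow_le_pow_right C.succ_pos hba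
  have hpos : 0 < (C + 1) ^ b := by positivity
  have := h C
  rw [pow_succ] at hpow
  nlinarith

theorem add_le_of_forall_choose_mul_choose_le {a b c D K : ℕ}
    (h : ∀ E : ℕ, (a + (D + E)).choose (D + E) * (b + (D + E)).choose (D + E) ≤
      (c + E).choose E * K) :
    a + b ≤ c := by
  refine le_of_forall_pow_le_mul_pow (C := a ! * b ! * ((c + 1) ^ c * K)) fun E => ?_
  calc (E + 1) ^ (a + b) ≤ (D + E + 1) ^ a * (D + E + 1) ^ b := by
        rw [pow_add]; gcongr <;> omega
    _ ≤ (a ! * (a + (D + E)).choose (D + E)) * (b ! * (b + (D + E)).choose (D + E)) := by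
        gcongr <;> exact pow_le_factorial_mul_choose _ _
    _ = a ! * b ! * ((a + (D + E)).choose (D + E) * (b + (D + E)).choose (D + E)) := by ring
    _ ≤ a ! * b ! * ((c + 1) ^ c * (E + 1) ^ c * K) := by
        exact Nat.mul_le_mul_left _
          ((h E).trans (Nat.mul_le_mul_right _ (choose_add_le_mul_pow c E)))
    _ = a ! * b ! * ((c + 1) ^ c * K) * (E + 1) ^ c := by ring

end Nat

namespace Submodule

variable {R A ρ : Type*} [CommSemiring R] [CommSemiring A] [Algebra R A] [DecidableEq A]

theorem span_range_pow_le [Fintype ρ] [DecidableEq ρ] (f : ρ → A) (e : ℕ) :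
    span R (Set.range f) ^ e ≤
      span R ↑((univ.finsuppAntidiag e).image fun γ : ρ →₀ ℕ => ∏ r, f r ^ γ r) := by
  induction e with
  | zero =>
    rw [pow_zero, one_eq_span, span_le, Set.singleton_subset_iff]
    exact subset_span (by simp)
  | succ e ih =>
    rw [pow_succ]
    refine (mul_le_mul' ih le_rfl).trans ?_
    rw [span_mul_span]
    refine span_mono ?_
    rintro _ ⟨_, hg, _, ⟨r, rfl⟩, rfl⟩
    obtain ⟨γ, hγ, rfl⟩ := Finset.mem_image.mp (Finset.mem_coe.mp hg)
    refine Finset.mem_coe.mpr (Finset.mem_image.mpr ⟨γ + Finsupp.single r 1, ?_, ?_⟩)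
    · simp_all [sum_add_distrib, Finsupp.single_apply]
    · simp only [Finsupp.coe_add, Pi.add_apply, pow_add, prod_mul_distrib]
      simp [Finsupp.single_apply]

end Submodule

namespace MvPolynomial

section Weighted

variable {σ R M : Type*} [CommSemiring R]

theorem weightedHomogeneousSubmodule_eq_span_monomial [AddCommMonoid M] (w : σ → M) (m : M) :
    weightedHomogeneousSubmodule R w m =
      Submodule.span R ((fun τ => monomial τ 1) '' {τ | Finsupp.weight w τ = m}) := by
  rw [weightedHomogeneousSubmodule_eq_finsupp_supported]
  exact restrictSupport_eq_span (R := R) _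

variable [AddCancelCommMonoid M]

attribute [local instance] weightedGradedAlgebra in
theorem weightedHomogeneousComponent_mul_of_isWeightedHomogeneous {w : σ → M} {m n : M}
    {f : MvPolynomial σ R} (hf : f.IsWeightedHomogeneous w n) (c : MvPolynomial σ R) :
    weightedHomogeneousComponent w (m + n) (c * f) = weightedHomogeneousComponent w m c * f := by
  classical
  simp only [← weightedDecomposition.decompose'_apply]
  exact DirectSum.coe_decompose_mul_add_of_right_mem _ hf

theorem weightedHomogeneousSubmodule_le_pow_mul {ρ : Type*} [Fintype ρ] {w : σ → M}
    {f : ρ → MvPolynomial σ R} {δ d₀ : M} (hf : ∀ r, (f r).IsWeightedHomogeneous w δ)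
    (hI : ∀ e : ℕ, ∀ p ∈ weightedHomogeneousSubmodule R w (d₀ + (e + 1) • δ),
      p ∈ Ideal.span (Set.range f)) (e : ℕ) :
    weightedHomogeneousSubmodule R w (d₀ + e • δ) ≤
      Submodule.span R (Set.range f) ^ e * weightedHomogeneousSubmodule R w d₀ := by
  induction e with
  | zero => simp
  | succ e ih =>
    intro p hp
    obtain ⟨c, rfl⟩ := Ideal.mem_span_range_iff_exists_fun.mp (hI e p hp)
    have hcomp : ∑ r, c r * f r =
        ∑ r, weightedHomogeneousComponent w (d₀ + e • δ) (c r) * f r := by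
      rw [← hp.weightedHomogeneousComponent_same, map_sum]
      refine sum_congr rfl fun r _ => ?_
      rw [add_smul, one_smul, ← add_assoc,
        weightedHomogeneousComponent_mul_of_isWeightedHomogeneous (hf r)]
    rw [hcomp, pow_succ, mul_right_comm]
    exact Submodule.sum_mem _ fun r _ => Submodule.mul_mem_mul
      (ih (weightedHomogeneousComponent_isWeightedHomogeneous _ _))
      (Submodule.subset_span ⟨r, rfl⟩)

end Weighted

variable {ι κ : Type*}

def biWeight (ι κ : Type*) : ι ⊕ κ → ℕ × ℕ := Sum.elim (fun _ => (1, 0)) fun _ => (0, 1)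

theorem monomial_mem_of_X_inl_mul_X_inr_pow_mem {R : Type*} [CommSemiring R]
    {I : Ideal (MvPolynomial (ι ⊕ κ) R)} {N : ℕ} (hN : ∀ i j, (X (.inl i) * X (.inr j)) ^ N ∈ I)
    {τ : ι ⊕ κ →₀ ℕ} {i : ι} {j : κ} (hi : N ≤ τ (.inl i)) (hj : N ≤ τ (.inr j)) :
    monomial τ 1 ∈ I := by
  refine I.mem_of_dvd ?_ (hN i j)
  rw [mul_pow, X_pow_eq_monomial, X_pow_eq_monomial, monomial_mul, one_mul,
    monomial_dvd_monomial]
  refine ⟨.inr fun s => ?_, one_dvd _⟩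
  rcases s with s | s
  · obtain rfl | hs := eq_or_ne s i <;> simp_all
  · obtain rfl | hs := eq_or_ne s j <;> simp_all

variable [Fintype ι] [Fintype κ]

theorem weight_biWeight (τ : ι ⊕ κ →₀ ℕ) :
    Finsupp.weight (biWeight ι κ) τ = (∑ i, τ (.inl i), ∑ j, τ (.inr j)) := by
  rw [Finsupp.weight_apply, Finsupp.sum_fintype _ _ (by simp), Fintype.sum_sum_type]
  ext <;> simp [biWeight, Prod.fst_sum, Prod.snd_sum]

theorem mem_of_isWeightedHomogeneous_of_X_inl_mul_X_inr_pow_mem [Nonempty ι] [Nonempty κ]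
    {R : Type*} [CommSemiring R] {I : Ideal (MvPolynomial (ι ⊕ κ) R)} {N : ℕ}
    (hN : ∀ i j, (X (.inl i) * X (.inr j)) ^ N ∈ I) {d : ℕ}
    (hι : Fintype.card ι * N ≤ d) (hκ : Fintype.card κ * N ≤ d) {p : MvPolynomial (ι ⊕ κ) R}
    (hp : p.IsWeightedHomogeneous (biWeight ι κ) (d, d)) : p ∈ I := by
  suffices weightedHomogeneousSubmodule R (biWeight ι κ) (d, d) ≤ I.restrictScalars R from this hp
  rw [weightedHomogeneousSubmodule_eq_span_monomial, Submodule.span_le]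
  rintro _ ⟨τ, hτ, rfl⟩
  simp only [Set.mem_ofPred_eq, weight_biWeight, Prod.mk.injEq] at hτ
  obtain ⟨i, -, hi⟩ := exists_le_of_sum_le univ_nonempty (f := fun _ => N)
    (g := fun i => τ (.inl i)) (by simpa [hτ.1] using hι)
  obtain ⟨j, -, hj⟩ := exists_le_of_sum_le univ_nonempty (f := fun _ => N)
    (g := fun j => τ (.inr j)) (by simpa [hτ.2] using hκ)
  exact monomial_mem_of_X_inl_mul_X_inr_pow_mem hN hi hj

section Nullstellensatz

variable {K ρ : Type*} [Field K] [IsAlgClosed K] {f : ρ → MvPolynomial (ι ⊕ κ) K}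

theorem X_inl_mul_X_inr_mem_radical
    (hzero : ∀ x : ι ⊕ κ → K, (∀ r, eval x (f r) = 0) → x ∘ .inl = 0 ∨ x ∘ .inr = 0)
    (i : ι) (j : κ) : X (.inl i) * X (.inr j) ∈ (Ideal.span (Set.range f)).radical := by
  rw [← vanishingIdeal_zeroLocus_eq_radical (K := K), mem_vanishingIdeal_iff]
  intro x hx
  have hfx : ∀ r, eval x (f r) = 0 := fun r =>
    (mem_zeroLocus_iff.mp hx) _ (Ideal.subset_span ⟨r, rfl⟩)
  rcases hzero x hfx with h | h
  · simpa using .inl (congrFun h i)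
  · simpa using .inr (congrFun h j)

theorem exists_X_inl_mul_X_inr_pow_mem
    (hzero : ∀ x : ι ⊕ κ → K, (∀ r, eval x (f r) = 0) → x ∘ .inl = 0 ∨ x ∘ .inr = 0) :
    ∃ N : ℕ, ∀ i j, (X (.inl i) * X (.inr j)) ^ N ∈ Ideal.span (Set.range f) := by
  have hJ : Ideal.span (Set.range fun p : ι × κ => (X (.inl p.1) * X (.inr p.2) :
      MvPolynomial (ι ⊕ κ) K)) ≤ (Ideal.span (Set.range f)).radical :=
    Ideal.span_le.mpr <| Set.range_subset_iff.mpr fun p => X_inl_mul_X_inr_mem_radical hzero p.1 p.2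
  obtain ⟨N, hN⟩ := Ideal.exists_pow_le_of_le_radical_of_fg hJ
    (Submodule.fg_span (Set.finite_range _))
  exact ⟨N, fun i j => hN (Ideal.pow_mem_pow (Ideal.subset_span (Set.mem_range_self (i, j))) N)⟩

end Nullstellensatz

section Bimonomials

variable [DecidableEq ι] [DecidableEq κ]

noncomputable def bimonomials (a b : ℕ) : Finset (ι ⊕ κ →₀ ℕ) :=
  (univ.finsuppAntidiag a ×ˢ univ.finsuppAntidiag b).map
    Finsupp.sumFinsuppEquivProdFinsupp.symm.toEmbedding

theorem coe_bimonomials (a b : ℕ) :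
    ((bimonomials a b : Finset (ι ⊕ κ →₀ ℕ)) : Set (ι ⊕ κ →₀ ℕ)) =
      {τ | Finsupp.weight (biWeight ι κ) τ = (a, b)} := by
  ext τ
  rw [Finset.mem_coe, bimonomials, Finset.mem_map_equiv]
  simp [weight_biWeight]
  rfl

theorem card_bimonomials (a b : ℕ) :
    #(bimonomials (ι := ι) (κ := κ) a b) =
      (Fintype.card ι + a - 1).choose a * (Fintype.card κ + b - 1).choose b := by
  simp [bimonomials, card_finsuppAntidiag_nat_eq_choose]

theorem card_bimonomials_le_of_le_pow_mul {K ρ : Type*} [Field K] [Fintype ρ] [DecidableEq ρ]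
    (f : ρ → MvPolynomial (ι ⊕ κ) K) {D E : ℕ}
    (h : weightedHomogeneousSubmodule K (biWeight ι κ) (D + E, D + E) ≤
      Submodule.span K (Set.range f) ^ E * weightedHomogeneousSubmodule K (biWeight ι κ) (D, D)) :
    #(bimonomials (ι := ι) (κ := κ) (D + E) (D + E)) ≤
      #(univ.finsuppAntidiag (ι := ρ) E) * #(bimonomials (ι := ι) (κ := κ) D D) := by
  classical
  set S := (univ.finsuppAntidiag E).image fun γ : ρ →₀ ℕ => ∏ r, f r ^ γ r
  set T := (bimonomials (ι := ι) (κ := κ) D D).image fun τ => monomial τ (1 : K)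
  have hspan : weightedHomogeneousSubmodule K (biWeight ι κ) (D + E, D + E) ≤
      Submodule.span K ↑(S * T) := by
    rw [Finset.coe_mul, ← Submodule.span_mul_span]
    refine h.trans (mul_le_mul' (Submodule.span_range_pow_le f E) ?_)
    rw [weightedHomogeneousSubmodule_eq_span_monomial, coe_image, coe_bimonomials]
  have hli : LinearIndependent K fun τ : bimonomials (ι := ι) (κ := κ) (D + E) (D + E) =>
      monomial (τ : ι ⊕ κ →₀ ℕ) (1 : K) := by
    simpa [Function.comp_def] using
      (basisMonomials (ι ⊕ κ) K).linearIndependent.comp _ Subtype.val_injective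
  have hrange : Set.range (fun τ : bimonomials (ι := ι) (κ := κ) (D + E) (D + E) =>
      monomial (τ : ι ⊕ κ →₀ ℕ) (1 : K)) ⊆
      Submodule.span K (↑(S * T) : Set (MvPolynomial (ι ⊕ κ) K)) := by
    rintro _ ⟨τ, rfl⟩
    have hτ := τ.2
    rw [← Finset.mem_coe, coe_bimonomials] at hτ
    exact hspan (isWeightedHomogeneous_monomial _ _ _ hτ)
  have hcard := linearIndependent_le_span_aux' _ hli _ hrange
  simp only [Fintype.card_coe, Finset.coe_sort_coe] at hcard
  exact hcard.trans (card_mul_le.trans (Nat.mul_le_mul card_image_le card_image_le))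

end Bimonomials

theorem card_add_card_le_of_isWeightedHomogeneous {K ρ : Type*} [Field K] [IsAlgClosed K]
    [Fintype ρ] [Nonempty ι] [Nonempty κ]
    (f : ρ → MvPolynomial (ι ⊕ κ) K) (hf : ∀ r, (f r).IsWeightedHomogeneous (biWeight ι κ) (1, 1))
    (hzero : ∀ x : ι ⊕ κ → K, (∀ r, eval x (f r) = 0) → x ∘ .inl = 0 ∨ x ∘ .inr = 0) :
    Fintype.card ι + Fintype.card κ ≤ Fintype.card ρ + 1 := by
  classical
  have : Nonempty ρ := by
    by_contra hρ
    rcases hzero 1 fun r => (hρ ⟨r⟩).elim with h | h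
    · exact one_ne_zero (congrFun h (Classical.arbitrary ι))
    · exact one_ne_zero (congrFun h (Classical.arbitrary κ))
  obtain ⟨N, hN⟩ := exists_X_inl_mul_X_inr_pow_mem hzero
  set D := (Fintype.card ι + Fintype.card κ) * N
  have hιD : Fintype.card ι * N ≤ D := Nat.mul_le_mul_right _ (Nat.le_add_right _ _)
  have hκD : Fintype.card κ * N ≤ D := Nat.mul_le_mul_right _ (Nat.le_add_left _ _)
  have hspan (E : ℕ) := weightedHomogeneousSubmodule_le_pow_mul hf (d₀ := (D, D))
    (fun e p hp => mem_of_isWeightedHomogeneous_of_X_inl_mul_X_inr_pow_mem hN (d := D + (e + 1))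
      (hιD.trans (Nat.le_add_right _ _)) (hκD.trans (Nat.le_add_right _ _))
      (by simpa [add_assoc] using hp)) E
  have hcount (E : ℕ) := card_bimonomials_le_of_le_pow_mul f (by simpa using hspan E)
  obtain ⟨a, ha⟩ := Nat.exists_eq_add_one.mpr (Fintype.card_pos (α := ι))
  obtain ⟨b, hb⟩ := Nat.exists_eq_add_one.mpr (Fintype.card_pos (α := κ))
  obtain ⟨c, hc⟩ := Nat.exists_eq_add_one.mpr (Fintype.card_pos (α := ρ))
  have := Nat.add_le_of_forall_choose_mul_choose_le (a := a) (b := b) (c := c) (D := D)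
    (K := #(bimonomials (ι := ι) (κ := κ) D D)) fun E => by
      simpa [card_bimonomials, card_finsuppAntidiag_nat_eq_choose, ha, hb, hc] using hcount E
  omega

end MvPolynomial

theorem LinearMap.finrank_add_finrank_le_of_apply_ne_zero {K A B C : Type*} [Field K]
    [IsAlgClosed K] [AddCommGroup A] [Module K A] [AddCommGroup B] [Module K B] [AddCommGroup C]
    [Module K C] [FiniteDimensional K A] [FiniteDimensional K B] [FiniteDimensional K C]
    [Nontrivial A] [Nontrivial B] (β : A →ₗ[K] B →ₗ[K] C)
    (hβ : ∀ a ≠ 0, ∀ b ≠ 0, β a b ≠ 0) : finrank K A + finrank K B ≤ finrank K C + 1 := by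
  let bA := finBasis K A
  let bB := finBasis K B
  let bC := finBasis K C
  have : Nonempty (Fin (finrank K A)) := Fin.pos_iff_nonempty.mp finrank_pos
  have : Nonempty (Fin (finrank K B)) := Fin.pos_iff_nonempty.mp finrank_pos
  let f (r : Fin (finrank K C)) : MvPolynomial (Fin (finrank K A) ⊕ Fin (finrank K B)) K :=
    ∑ i, ∑ j, MvPolynomial.C (bC.repr (β (bA i) (bB j)) r) * (X (.inl i) * X (.inr j))
  have hf (r) : (f r).IsWeightedHomogeneous (biWeight _ _) (1, 1) :=
    IsWeightedHomogeneous.sum _ _ _ fun i _ => IsWeightedHomogeneous.sum _ _ _ fun j _ =>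
      ((isWeightedHomogeneous_X K _ (Sum.inl i)).mul
        (isWeightedHomogeneous_X K _ (Sum.inr j))).C_mul _
  have heval (x) (r) : eval x (f r) =
      bC.repr (β (bA.equivFun.symm (x ∘ .inl)) (bB.equivFun.symm (x ∘ .inr))) r := by
    simp [f, Basis.equivFun_symm_apply, map_sum, Finsupp.finsetSum_apply, Finset.mul_sum,
      mul_comm, mul_left_comm]
    simp only [mul_assoc]
    exact Finset.sum_comm
  have hzero (x) (hx : ∀ r, eval x (f r) = 0) : x ∘ .inl = 0 ∨ x ∘ .inr = 0 := by
    by_contra! h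
    refine hβ _ (bA.equivFun.symm.map_ne_zero_iff.mpr h.1) _
      (bB.equivFun.symm.map_ne_zero_iff.mpr h.2) (bC.repr.injective ?_)
    ext r
    simpa [heval] using hx r
  simpa using card_add_card_le_of_isWeightedHomogeneous f hf hzero

/-- Let `V` and `W` be finite-dimensional complex vector spaces and let `U` be a linear
subspace of `Hom(V, W)` such that every nonzero element of `U` is injective.
Then `dim U ≤ dim W − dim V + 1` (truncated subtraction on ℕ). -/
theorem stmt0 (V W : Type*) [AddCommGroup V] [Module ℂ V] [AddCommGroup W] [Module ℂ W]
    [FiniteDimensional ℂ V] [FiniteDimensional ℂ W]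
    (U : Submodule ℂ (V →ₗ[ℂ] W))
    (hU : ∀ u ∈ U, u ≠ 0 → Function.Injective u) :
    Module.finrank ℂ U ≤ Module.finrank ℂ W - Module.finrank ℂ V + 1 := by
  rcases subsingleton_or_nontrivial U with hU₀ | hU₀
  · simp [finrank_zero_of_subsingleton]
  obtain ⟨u, hu⟩ := exists_ne (0 : U)
  obtain ⟨v, hv⟩ : ∃ v, (u : V →ₗ[ℂ] W) v ≠ 0 := by
    by_contra! h
    exact hu (Subtype.ext (LinearMap.ext h))
  have : Nontrivial V := nontrivial_of_ne v 0 fun h => hv (by simp [h])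
  have := U.subtype.finrank_add_finrank_le_of_apply_ne_zero fun u hu v hv huv =>
    hv (hU u u.2 (by simpa using hu) (huv.trans (map_zero _).symm))
  omega
end

section
/- Let A = ⊕_{i≤0} A_i be a commutative ℤ-graded unital ℂ-algebra generated by the finite-dimensional component A := A_{-1}, and let M = ⊕_{i≥−1} M_i be a ℤ-graded A-module with dim M_i < ∞ for all i. Assume M is transitive, i.e., for every i ≥ 0 and every nonzero m ∈ M_i one has A·m ≠ 0 (where A = A_{-1}). If M is infinite-dimensional, then there exists a nonzero element m ∈ M_0 such that the kernel of the map A → M, a ↦ a·m, has codimension 1 in A. -/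
/-! Induction on `dim A`. Fix `a ≠ 0` in `A`. If the kernels of `a` on `M` are nonzero in
arbitrarily high degrees, they form an infinite-dimensional module over the smaller algebra
`A ⧸ K ∙ a`, and induction applies. Otherwise `a` is injective in high degrees, so the dimensions
of the components stabilise and `a` is eventually bijective; then the operators `a⁻¹ b` on one
component commute, and a common eigenvector `v` has `b • v ∈ K ∙ (a • v)` for all `b`, i.e.
`A • v` has dimension at most one. Since `A • (b • v) = b • (A • v)`, transitivity carries such
a vector down to degree `0`, where it cannot be killed by all of `A`. -/

open Module LinearMap Function

universe u v

section InjectiveChain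

variable {K : Type*} [Field K] {V : ℕ → Type*} [∀ n, AddCommGroup (V n)] [∀ n, Module K (V n)]
  [∀ n, FiniteDimensional K (V n)] (f : ∀ n, V (n + 1) →ₗ[K] V n) {N : ℕ}

lemma finrank_le_finrank_of_forall_injective (hf : ∀ n, N ≤ n → Injective (f n)) {m n : ℕ}
    (hm : N ≤ m) (hmn : m ≤ n) : finrank K (V n) ≤ finrank K (V m) := by
  induction n, hmn using Nat.le_induction with
  | base => exact le_rfl
  | succ n hmn ih => exact (finrank_le_finrank_of_injective (hf n (hm.trans hmn))).trans ih

lemma exists_forall_bijective_of_forall_injective (hf : ∀ n, N ≤ n → Injective (f n)) :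
    ∃ n₀, N ≤ n₀ ∧ ∀ n, n₀ ≤ n → Bijective (f n) := by
  let d : ℕ →o ℕᵒᵈ := ⟨fun k => OrderDual.toDual (finrank K (V (N + k))), fun k l hkl =>
    finrank_le_finrank_of_forall_injective f hf (by omega) (by omega)⟩
  obtain ⟨k, hk⟩ := WellFoundedGT.monotone_chain_condition d
  have hconst : ∀ n, N + k ≤ n → finrank K (V n) = finrank K (V (N + k)) := fun n hn => by
    obtain ⟨l, rfl⟩ := Nat.exists_eq_add_of_le hn
    rw [Nat.add_assoc]
    exact (hk (k + l) (by omega)).symm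
  refine ⟨N + k, by omega, fun n hn => ⟨hf n (by omega), ?_⟩⟩
  refine (injective_iff_surjective_of_finrank_eq_finrank ?_).mp (hf n (by omega))
  rw [hconst n hn, hconst (n + 1) (by omega)]

end InjectiveChain

namespace Module.End

variable {K : Type*} [Field K] [IsAlgClosed K]

theorem exists_ne_zero_forall_apply_eq_smul_of_commute {ι : Type*} {V : Type v} [AddCommGroup V]
    [Module K V] [FiniteDimensional K V] [Nontrivial V] (f : ι → End K V)
    (hf : ∀ i j, Commute (f i) (f j)) : ∃ v : V, v ≠ 0 ∧ ∀ i, ∃ μ : K, f i v = μ • v := by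
  induction h : finrank K V using Nat.strong_induction_on generalizing V with
  | _ d ih =>
  by_cases hscalar : ∀ i, ∃ μ : K, f i = μ • 1
  · obtain ⟨v, hv⟩ := exists_ne (0 : V)
    refine ⟨v, hv, fun i => ?_⟩
    obtain ⟨μ, hμ⟩ := hscalar i
    exact ⟨μ, by simp [hμ]⟩
  push Not at hscalar
  obtain ⟨i, hi⟩ := hscalar
  obtain ⟨μ, hμ⟩ := (f i).exists_eigenvalue
  set E := (f i).eigenspace μ
  have hE (j) : Set.MapsTo (f j) E E := mapsTo_genEigenspace_of_comm (hf i j) μ 1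
  have : Nontrivial E := Submodule.nontrivial_iff_ne_bot.mpr hμ
  have hEtop : E ≠ ⊤ := fun htop => hi μ <| LinearMap.ext fun x => by
    simpa using mem_eigenspace_iff.mp (htop ▸ Submodule.mem_top : x ∈ E)
  obtain ⟨w, hw, hw'⟩ := ih _ (h ▸ Submodule.finrank_lt hEtop) (fun j => (f j).restrict (hE j))
    (fun j k => restrict_commute (hf j k) (hE j) (hE k)) rfl
  refine ⟨w, by simpa using hw, fun j => ?_⟩
  obtain ⟨ν, hν⟩ := hw' j
  exact ⟨ν, congrArg Subtype.val hν⟩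

end Module.End

section GradedAction

variable {K : Type*} [Field K] {A : Type u} [AddCommGroup A] [Module K A]
  {M : ℕ → Type v} [∀ n, AddCommGroup (M n)] [∀ n, Module K (M n)]

def ActionCommutes (act : ∀ n, A →ₗ[K] M (n + 1) →ₗ[K] M n) : Prop :=
  ∀ n (a b : A) (m : M (n + 2)), act n a (act (n + 1) b m) = act n b (act (n + 1) a m)

variable {act : ∀ n, A →ₗ[K] M (n + 1) →ₗ[K] M n}

namespace ActionCommutes

lemma flip_act_eq_comp (comm : ActionCommutes act) (n : ℕ) (b : A) (v : M (n + 2)) :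
    (act n).flip (act (n + 1) b v) = act n b ∘ₗ (act (n + 1)).flip v :=
  LinearMap.ext fun a => comm n a b v

lemma finrank_range_flip_act_le [FiniteDimensional K A] (comm : ActionCommutes act) (n : ℕ)
    (b : A) (v : M (n + 2)) :
    finrank K (range ((act n).flip (act (n + 1) b v))) ≤
      finrank K (range ((act (n + 1)).flip v)) := by
  rw [comm.flip_act_eq_comp, range_comp]
  exact Submodule.finrank_map_le _ _

lemma exists_degree_one_finrank_range_flip_le_one [FiniteDimensional K A] (comm : ActionCommutes act)
    (htrans : ∀ n, ∀ m : M (n + 1), m ≠ 0 → ∃ a : A, act n a m ≠ 0) :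
    ∀ n (v : M (n + 1)), v ≠ 0 → finrank K (range ((act n).flip v)) ≤ 1 →
      ∃ m : M 1, m ≠ 0 ∧ finrank K (range ((act 0).flip m)) ≤ 1
  | 0, v, hv, hle => ⟨v, hv, hle⟩
  | n + 1, v, hv, hle =>
    let ⟨b, hb⟩ := htrans (n + 1) v hv
    comm.exists_degree_one_finrank_range_flip_le_one htrans n _ hb ((comm.finrank_range_flip_act_le n b v).trans hle)

noncomputable def restrictKer (comm : ActionCommutes act) (a : A) (n : ℕ) :
    A →ₗ[K] ker (act (n + 1) a) →ₗ[K] ker (act n a) :=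
  codRestrict₂ ((act (n + 1)).compl₂ (ker (act (n + 1) a)).subtype) (ker (act n a)).subtype
    Subtype.val_injective fun b x => by
      simp only [Submodule.range_subtype, mem_ker, compl₂_apply, Submodule.subtype_apply]
      rw [comm, (mem_ker.mp x.2), map_zero]

@[simp]
lemma restrictKer_apply_coe (comm : ActionCommutes act) (a : A) (n : ℕ) (b : A)
    (x : ker (act (n + 1) a)) : (comm.restrictKer a n b x : M (n + 1)) = act (n + 1) b x :=
  codRestrict₂_apply (i := (ker (act n a)).subtype) _ _ _ b x

lemma span_le_ker_restrictKer (comm : ActionCommutes act) (a : A) (n : ℕ) :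
    K ∙ a ≤ ker (comm.restrictKer a n) := by
  refine (Submodule.span_singleton_le_iff_mem _ _).mpr (LinearMap.ext fun x => Subtype.ext ?_)
  simp [mem_ker.mp x.2]

noncomputable def quotientKer (comm : ActionCommutes act) (a : A) (n : ℕ) :
    (A ⧸ K ∙ a) →ₗ[K] ker (act (n + 1) a) →ₗ[K] ker (act n a) :=
  (K ∙ a).liftQ (comm.restrictKer a n) (comm.span_le_ker_restrictKer a n)

lemma quotientKer_mk (comm : ActionCommutes act) (a : A) (n : ℕ) (b : A) :
    comm.quotientKer a n (Submodule.Quotient.mk b) = comm.restrictKer a n b := rfl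

lemma actionCommutes_quotientKer (comm : ActionCommutes act) (a : A) :
    ActionCommutes (M := fun n => ker (act n a)) (comm.quotientKer a) := by
  intro n b c x
  induction b using Submodule.Quotient.induction_on
  induction c using Submodule.Quotient.induction_on
  ext
  simp only [quotientKer_mk, restrictKer_apply_coe]
  exact comm _ _ _ _

lemma finrank_range_flip_quotientKer (comm : ActionCommutes act) (a : A) (n : ℕ) (x : ker (act (n + 1) a)) :
    finrank K (range ((comm.quotientKer a n).flip x)) =
      finrank K (range ((act (n + 1)).flip (x : M (n + 2)))) := by
  have hcomp : (ker (act n a)).subtype ∘ₗ (comm.quotientKer a n).flip x ∘ₗ (K ∙ a).mkQ =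
      (act (n + 1)).flip x := LinearMap.ext fun b => restrictKer_apply_coe comm a n b x
  rw [← hcomp, range_comp, range_comp_of_range_eq_top _ (Submodule.range_mkQ _),
    Submodule.finrank_map_subtype_eq]

lemma exists_ne_zero_finrank_range_flip_le_one_of_bijective [IsAlgClosed K] {n : ℕ}
    [FiniteDimensional K (M (n + 1))] [Nontrivial (M (n + 1))] (comm : ActionCommutes act)
    {a : A} (h₀ : Bijective (act n a)) (h₁ : Surjective (act (n + 1) a)) :
    ∃ v : M (n + 1), v ≠ 0 ∧ finrank K (range ((act n).flip v)) ≤ 1 := by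
  let e := LinearEquiv.ofBijective (act n a) h₀
  let r (b : A) : End K (M (n + 1)) := e.symm.toLinearMap ∘ₗ act n b
  have hr (b : A) (u : M (n + 2)) : r b (act (n + 1) a u) = act (n + 1) b u :=
    e.symm_apply_eq.mpr (comm n b a u)
  have hcomm (b c : A) : Commute (r b) (r c) := LinearMap.ext fun x => by
    obtain ⟨u, rfl⟩ := h₁ x
    calc r b (r c (act (n + 1) a u)) = r b (act (n + 1) c u) := by rw [hr]
      _ = r c (act (n + 1) b u) := congrArg e.symm (comm n b c u)
      _ = r c (r b (act (n + 1) a u)) := by rw [hr]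
  obtain ⟨v, hv, hev⟩ := Module.End.exists_ne_zero_forall_apply_eq_smul_of_commute r hcomm
  have hrange : range ((act n).flip v) ≤ K ∙ act n a v := by
    rintro _ ⟨b, rfl⟩
    obtain ⟨μ, hμ⟩ := hev b
    refine Submodule.mem_span_singleton.mpr ⟨μ, ?_⟩
    rw [flip_apply, e.symm_apply_eq.mp hμ, map_smul]
    rfl
  refine ⟨v, hv, (Submodule.finrank_mono hrange).trans ?_⟩
  exact (finrank_span_le_card {act n a v}).trans (by simp)

end ActionCommutes

theorem exists_ne_zero_finrank_range_flip_le_one [IsAlgClosed K] [FiniteDimensional K A]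
    [∀ n, FiniteDimensional K (M n)] (comm : ActionCommutes act)
    (hinf : ∀ N : ℕ, ∃ n, N ≤ n ∧ ∃ m : M n, m ≠ 0) :
    ∃ n, ∃ v : M (n + 1), v ≠ 0 ∧ finrank K (range ((act n).flip v)) ≤ 1 := by
  induction h : finrank K A using Nat.strong_induction_on generalizing A M with
  | _ d ih =>
  obtain hA | hA := subsingleton_or_nontrivial A
  · obtain ⟨n, hn, v, hv⟩ := hinf 1
    obtain ⟨n, rfl⟩ := Nat.exists_eq_add_of_le' hn
    refine ⟨n, v, hv, (finrank_range_le _).trans ?_⟩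
    simp [finrank_zero_of_subsingleton]
  obtain ⟨a, ha⟩ := exists_ne (0 : A)
  by_cases hker : ∀ N, ∃ n, N ≤ n ∧ ∃ x : ker (act n a), x ≠ 0
  · have hlt : finrank K (A ⧸ K ∙ a) < d := by
      have := (K ∙ a).finrank_quotient_add_finrank
      rw [finrank_span_singleton ha] at this
      omega
    obtain ⟨n, x, hx, hle⟩ := ih _ hlt (comm.actionCommutes_quotientKer a) hker rfl
    refine ⟨n + 1, x, by simpa using hx, ?_⟩
    rwa [← comm.finrank_range_flip_quotientKer]
  push Not at hker
  obtain ⟨N, hN⟩ := hker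
  have hinj (n : ℕ) (hn : N ≤ n) : Injective (act n a) :=
    (injective_iff_map_eq_zero _).mpr fun y hy => congrArg Subtype.val (hN n hn ⟨y, hy⟩)
  obtain ⟨n₀, hn₀, hbij⟩ := exists_forall_bijective_of_forall_injective (fun n => act n a) hinj
  have : Nontrivial (M (n₀ + 1)) := by
    obtain ⟨n, hn, m, hm⟩ := hinf (n₀ + 1)
    have : Nontrivial (M n) := ⟨⟨m, 0, hm⟩⟩
    have hle := finrank_le_finrank_of_forall_injective (fun n => act n a) hinj (m := n₀ + 1)
      (by omega) hn
    exact (finrank_pos_iff (R := K)).mp (finrank_pos.trans_le hle)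
  exact ⟨n₀, comm.exists_ne_zero_finrank_range_flip_le_one_of_bijective (hbij n₀ le_rfl)
    (hbij (n₀ + 1) (by omega)).2⟩

end GradedAction

/-- Main technical theorem, reformulated version.  `A` stands for the component `A_{-1}`
of a commutative ℤ-graded algebra generated by `A_{-1}`; `M n` stands for the graded
component of degree `n - 1` of a graded module, so `M 0` has degree `-1` and `M 1` has
degree `0`.  The action of `A_{-1}` lowers degrees by one; `comm` expresses commutativity
of the algebra, `htrans` the transitivity of the module (nonzero elements of degree `≥ 0`
are not killed by all of `A`), and `hinf` that `M` is infinite-dimensional (each component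
being finite-dimensional, this means: there are components of arbitrarily large degree).
Then there is a nonzero `m` of degree `0` whose kernel `{a : A | a·m = 0}` has
codimension `1` in `A`. -/
theorem stmt1 (A : Type*) [AddCommGroup A] [Module ℂ A] [FiniteDimensional ℂ A]
    (M : ℕ → Type*) [∀ n, AddCommGroup (M n)] [∀ n, Module ℂ (M n)]
    [∀ n, FiniteDimensional ℂ (M n)]
    (act : ∀ n, A →ₗ[ℂ] (M (n + 1) →ₗ[ℂ] M n))
    (comm : ∀ n (a b : A) (m : M (n + 2)),
      act n a (act (n + 1) b m) = act n b (act (n + 1) a m))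
    (htrans : ∀ n, ∀ m : M (n + 1), m ≠ 0 → ∃ a : A, act n a m ≠ 0)
    (hinf : ∀ N : ℕ, ∃ n, N ≤ n ∧ ∃ m : M n, m ≠ 0) :
    ∃ m : M 1, m ≠ 0 ∧
      Module.finrank ℂ (LinearMap.ker ((act 0).flip m)) + 1 = Module.finrank ℂ A := by
  have comm : ActionCommutes act := comm
  obtain ⟨n, v, hv, hle⟩ := exists_ne_zero_finrank_range_flip_le_one comm hinf
  obtain ⟨m, hm, hle₁⟩ := comm.exists_degree_one_finrank_range_flip_le_one htrans n v hv hle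
  obtain ⟨b, hb⟩ := htrans 0 m hm
  have hpos : 0 < finrank ℂ (range ((act 0).flip m)) :=
    finrank_pos_iff_exists_ne_zero.mpr ⟨⟨_, b, rfl⟩, by simpa using hb⟩
  have := finrank_range_add_finrank_ker ((act 0).flip m)
  exact ⟨m, hm, by omega⟩
end

section
/- Let V₁ and V₂ be finite-dimensional complex vector spaces with dim V₁ ≥ 2 and dim V₂ ≥ 2. Then for all linear operators A ∈ End(V₁) and B ∈ End(V₂), the operator A ⊗ 1_{V₂} + 1_{V₁} ⊗ B ∈ End(V₁ ⊗ V₂) never has rank exactly 1. -/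
open TensorProduct Module

section helpers
variable {V₁ V₂ : Type*} [AddCommGroup V₁] [Module ℂ V₁]
    [AddCommGroup V₂] [Module ℂ V₂]
    [FiniteDimensional ℂ V₁] [FiniteDimensional ℂ V₂]

private lemma tmul_eq_zero_left {v : V₁} {a : V₂} (hv : v ≠ 0) (h : v ⊗ₜ[ℂ] a = 0) : a = 0 := by
  have hex : ∃ f : Module.Dual ℂ V₁, f v ≠ 0 := by
    by_contra hall
    push_neg at hall
    exact hv ((Module.forall_dual_apply_eq_zero_iff ℂ v).mp fun φ => hall φ)
  obtain ⟨f, hf⟩ := hex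
  have h0 := congrArg ((TensorProduct.lid ℂ V₂).toLinearMap ∘ₗ LinearMap.rTensor V₂ f) h
  simp only [LinearMap.comp_apply, LinearMap.rTensor_tmul, LinearEquiv.coe_coe,
    TensorProduct.lid_tmul, map_zero] at h0
  rcases smul_eq_zero.mp h0 with h' | h'
  · exact absurd h' hf
  · exact h'

private lemma tmul_eq_zero_right {a : V₁} {v : V₂} (hv : v ≠ 0) (h : a ⊗ₜ[ℂ] v = 0) : a = 0 := by
  have hex : ∃ f : Module.Dual ℂ V₂, f v ≠ 0 := by
    by_contra hall
    push_neg at hall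
    exact hv ((Module.forall_dual_apply_eq_zero_iff ℂ v).mp fun φ => hall φ)
  obtain ⟨f, hf⟩ := hex
  have h0 := congrArg ((TensorProduct.rid ℂ V₁).toLinearMap ∘ₗ LinearMap.lTensor V₁ f) h
  simp only [LinearMap.comp_apply, LinearMap.lTensor_tmul, LinearEquiv.coe_coe,
    TensorProduct.rid_tmul, map_zero] at h0
  rcases smul_eq_zero.mp h0 with h' | h'
  · exact absurd h' hf
  · exact h'

private lemma auxL {v x : V₁} {a b : V₂} (hx : x ∉ Submodule.span ℂ {v})
    (h : v ⊗ₜ[ℂ] a + x ⊗ₜ[ℂ] b = 0) : b = 0 := by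
  obtain ⟨f, hfx, hmap⟩ := Submodule.exists_dual_map_eq_bot_of_notMem hx inferInstance
  have hfv : f v = 0 := by
    have hm : f v ∈ (Submodule.span ℂ {v}).map f :=
      Submodule.mem_map_of_mem (Submodule.mem_span_singleton_self v)
    rw [hmap] at hm
    simpa using hm
  have h0 := congrArg ((TensorProduct.lid ℂ V₂).toLinearMap ∘ₗ LinearMap.rTensor V₂ f) h
  simp only [LinearMap.comp_apply, map_add, LinearMap.rTensor_tmul, LinearEquiv.coe_coe,
    TensorProduct.lid_tmul, map_zero, hfv, zero_smul, zero_add] at h0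
  rcases smul_eq_zero.mp h0 with h' | h'
  · exact absurd h' hfx
  · exact h'

private lemma exists_ker {C : V₁ →ₗ[ℂ] V₁} {v : V₁} (hv : v ≠ 0)
    (h2 : 2 ≤ finrank ℂ V₁) (hr : LinearMap.range C ≤ Submodule.span ℂ {v}) :
    ∃ x, x ≠ 0 ∧ C x = 0 := by
  have h1 : finrank ℂ (LinearMap.range C) ≤ 1 := by
    have := Submodule.finrank_mono hr
    rwa [finrank_span_singleton hv] at this
  have hk := C.finrank_range_add_finrank_ker
  have hne : LinearMap.ker C ≠ ⊥ := by
    intro hbot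
    rw [hbot, finrank_bot] at hk
    omega
  obtain ⟨x, hx, hx0⟩ := (Submodule.ne_bot_iff _).mp hne
  exact ⟨x, hx0, hx⟩

private lemma exists_nmem (v : V₁) (h2 : 2 ≤ finrank ℂ V₁) :
    ∃ x, x ∉ Submodule.span ℂ {v} := by
  by_contra h
  push_neg at h
  have htop : (⊤ : Submodule ℂ V₁) ≤ Submodule.span ℂ {v} := fun x _ => h x
  have hle := Submodule.finrank_mono htop
  rw [finrank_top] at hle
  have hle1 : finrank ℂ (Submodule.span ℂ ({v} : Set V₁)) ≤ 1 := by
    rcases eq_or_ne v 0 with rfl | hv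
    · rw [Submodule.span_zero_singleton, finrank_bot]; omega
    · rw [finrank_span_singleton hv]
  omega

end helpers

/-- Let `V₁`, `V₂` be finite-dimensional complex vector spaces of dimensions `≥ 2`.
Then for all linear operators `A : End V₁` and `B : End V₂`, the operator
`A ⊗ 1 + 1 ⊗ B` on `V₁ ⊗ V₂` never has rank exactly `1`. -/
theorem stmt16 (V₁ V₂ : Type*) [AddCommGroup V₁] [Module ℂ V₁]
    [AddCommGroup V₂] [Module ℂ V₂]
    [FiniteDimensional ℂ V₁] [FiniteDimensional ℂ V₂]
    (h1 : 2 ≤ Module.finrank ℂ V₁) (h2 : 2 ≤ Module.finrank ℂ V₂)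
    (A : Module.End ℂ V₁) (B : Module.End ℂ V₂) :
    Module.finrank ℂ
      ↥(LinearMap.range
        (TensorProduct.map A (LinearMap.id : V₂ →ₗ[ℂ] V₂)
          + TensorProduct.map (LinearMap.id : V₁ →ₗ[ℂ] V₁) B)) ≠ 1 := by
  intro hrank
  set T : V₁ ⊗[ℂ] V₂ →ₗ[ℂ] V₁ ⊗[ℂ] V₂ :=
    TensorProduct.map A (LinearMap.id : V₂ →ₗ[ℂ] V₂)
      + TensorProduct.map (LinearMap.id : V₁ →ₗ[ℂ] V₁) B with hTdef
  have hT : ∀ (x : V₁) (y : V₂), T (x ⊗ₜ[ℂ] y) = A x ⊗ₜ[ℂ] y + x ⊗ₜ[ℂ] B y := by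
    intro x y
    simp [hTdef]
  -- nontrivial instances
  have : Nontrivial V₁ := Module.nontrivial_of_finrank_pos (R := ℂ) (by omega)
  have : Nontrivial V₂ := Module.nontrivial_of_finrank_pos (R := ℂ) (by omega)
  -- the generator of the range
  obtain ⟨t, ht0, htall⟩ := (finrank_eq_one_iff' (K := ℂ)
    (V := ↥(LinearMap.range T))).mp hrank
  have ht0' : (t : V₁ ⊗[ℂ] V₂) ≠ 0 := fun h => ht0 (Subtype.coe_injective (by simpa using h))
  have hTt : ∀ (x : V₁) (y : V₂), ∃ c : ℂ, T (x ⊗ₜ[ℂ] y) = c • (t : V₁ ⊗[ℂ] V₂) := by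
    intro x y
    obtain ⟨c, hc⟩ := htall ⟨T (x ⊗ₜ[ℂ] y), ⟨x ⊗ₜ[ℂ] y, rfl⟩⟩
    refine ⟨c, ?_⟩
    have hcc := congrArg (Subtype.val) hc
    simpa using hcc.symm
  -- a pure tensor on which T is nonzero
  have hpure : ∃ (x : V₁) (y : V₂), T (x ⊗ₜ[ℂ] y) ≠ 0 := by
    by_contra hall
    push_neg at hall
    have hbot : LinearMap.range T = ⊥ := by
      rw [LinearMap.range_eq_map, ← TensorProduct.span_tmul_eq_top ℂ V₁ V₂, Submodule.map_span]
      refine le_bot_iff.mp (Submodule.span_le.mpr ?_)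
      rintro z ⟨z', ⟨x, y, rfl⟩, rfl⟩
      simp [hall x y]
    rw [hbot, finrank_bot] at hrank
    omega
  -- eigenvalues
  obtain ⟨lam, hlam⟩ := Module.End.exists_eigenvalue A
  obtain ⟨v, hv⟩ := hlam.exists_hasEigenvector
  obtain ⟨mu, hmu⟩ := Module.End.exists_eigenvalue B
  obtain ⟨w, hw⟩ := hmu.exists_hasEigenvector
  have hAv : A v = lam • v := hv.apply_eq_smul
  have hBw : B w = mu • w := hw.apply_eq_smul
  have hv0 : v ≠ 0 := hv.2
  have hw0 : w ≠ 0 := hw.2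
  by_cases hcase1 : ∀ y : V₂, B y = -(lam • y)
  · -- Case I : B = -lam • id, so T = (A - lam) ⊗ 1
    have hTform : ∀ (x : V₁) (y : V₂), T (x ⊗ₜ[ℂ] y) = (A x - lam • x) ⊗ₜ[ℂ] y := by
      intro x y
      rw [hT, hcase1 y]
      simp only [sub_tmul, tmul_neg, tmul_smul, ← smul_tmul']
      module
    obtain ⟨x₀, y₀, hxy⟩ := hpure
    set s : V₁ := A x₀ - lam • x₀ with hs
    rw [hTform] at hxy
    have hs0 : s ≠ 0 := fun h => hxy (by rw [← hs, h, zero_tmul])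
    obtain ⟨y₂, hy₂⟩ := exists_nmem y₀ h2
    obtain ⟨a, ha⟩ := hTt x₀ y₀
    obtain ⟨b, hb⟩ := hTt x₀ y₂
    rw [hTform, ← hs] at ha hb
    have ha0 : a ≠ 0 := by
      rintro rfl
      rw [zero_smul] at ha
      exact hxy ha
    have hzero : s ⊗ₜ[ℂ] (a • y₂ - b • y₀) = 0 := by
      simp only [tmul_sub, tmul_smul, ha, hb]
      module
    have := tmul_eq_zero_left hs0 hzero
    have hy₂' : y₂ ∈ Submodule.span ℂ ({y₀} : Set V₂) := by
      rw [Submodule.mem_span_singleton]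
      refine ⟨a⁻¹ * b, ?_⟩
      have : a • y₂ = b • y₀ := sub_eq_zero.mp this
      rw [mul_smul, ← this, smul_smul, inv_mul_cancel₀ ha0, one_smul]
    exact hy₂ hy₂'
  by_cases hcase2 : ∀ x : V₁, A x = -(mu • x)
  · -- Case II : A = -mu • id, so T = 1 ⊗ (B - mu)
    have hTform : ∀ (x : V₁) (y : V₂), T (x ⊗ₜ[ℂ] y) = x ⊗ₜ[ℂ] (B y - mu • y) := by
      intro x y
      rw [hT, hcase2 x]
      simp only [tmul_sub, neg_tmul, tmul_smul, ← smul_tmul']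
      module
    obtain ⟨x₀, y₀, hxy⟩ := hpure
    set q : V₂ := B y₀ - mu • y₀ with hq
    rw [hTform] at hxy
    have hq0 : q ≠ 0 := fun h => hxy (by rw [← hq, h, tmul_zero])
    obtain ⟨x₂, hx₂⟩ := exists_nmem x₀ h1
    obtain ⟨a, ha⟩ := hTt x₀ y₀
    obtain ⟨b, hb⟩ := hTt x₂ y₀
    rw [hTform, ← hq] at ha hb
    have ha0 : a ≠ 0 := by
      rintro rfl
      rw [zero_smul] at ha
      exact hxy ha
    have hzero : (a • x₂ - b • x₀) ⊗ₜ[ℂ] q = 0 := by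
      simp only [sub_tmul, ← smul_tmul', ha, hb]
      module
    have := tmul_eq_zero_right hq0 hzero
    have hx₂' : x₂ ∈ Submodule.span ℂ ({x₀} : Set V₁) := by
      rw [Submodule.mem_span_singleton]
      refine ⟨a⁻¹ * b, ?_⟩
      have : a • x₂ = b • x₀ := sub_eq_zero.mp this
      rw [mul_smul, ← this, smul_smul, inv_mul_cancel₀ ha0, one_smul]
    exact hx₂ hx₂'
  -- Case III
  push_neg at hcase1 hcase2
  obtain ⟨y₀, hy₀⟩ := hcase1
  obtain ⟨x₀, hx₀⟩ := hcase2
  set u : V₂ := B y₀ + lam • y₀ with hu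
  set p : V₁ := A x₀ + mu • x₀ with hp
  have hu0 : u ≠ 0 := by
    intro h
    rw [hu] at h
    exact hy₀ (eq_neg_of_add_eq_zero_left h)
  have hp0 : p ≠ 0 := by
    intro h
    rw [hp] at h
    exact hx₀ (eq_neg_of_add_eq_zero_left h)
  have hTvy : ∀ y : V₂, T (v ⊗ₜ[ℂ] y) = v ⊗ₜ[ℂ] (B y + lam • y) := by
    intro y
    rw [hT, hAv]
    simp only [tmul_add, tmul_smul, ← smul_tmul']
    module
  have hTxw : ∀ x : V₁, T (x ⊗ₜ[ℂ] w) = (A x + mu • x) ⊗ₜ[ℂ] w := by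
    intro x
    rw [hT, hBw]
    simp only [add_tmul, tmul_smul, ← smul_tmul']
  have hvu0 : v ⊗ₜ[ℂ] u ≠ 0 := fun h => hu0 (tmul_eq_zero_left hv0 h)
  obtain ⟨a, ha⟩ := hTt v y₀
  rw [hTvy, ← hu] at ha
  have ha0 : a ≠ 0 := by
    rintro rfl
    rw [zero_smul] at ha
    exact hvu0 ha
  -- every T (x ⊗ y) is a multiple of v ⊗ u
  have hspan2 : ∀ (x : V₁) (y : V₂), ∃ d : ℂ, T (x ⊗ₜ[ℂ] y) = d • (v ⊗ₜ[ℂ] u) := by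
    intro x y
    obtain ⟨e, he⟩ := hTt x y
    refine ⟨e * a⁻¹, ?_⟩
    have hti : a⁻¹ • (v ⊗ₜ[ℂ] u) = (t : V₁ ⊗[ℂ] V₂) := by
      rw [ha, smul_smul, inv_mul_cancel₀ ha0, one_smul]
    rw [he, mul_smul, hti]
  -- range of (A + mu) is contained in span {v}
  have hAr : ∀ x : V₁, (A x + mu • x) ∈ Submodule.span ℂ ({v} : Set V₁) := by
    intro x
    by_contra hnm
    obtain ⟨d, hd⟩ := hspan2 x w
    rw [hTxw] at hd
    have hzero : v ⊗ₜ[ℂ] (d • u) + (A x + mu • x) ⊗ₜ[ℂ] (-w) = 0 := by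
      simp only [tmul_neg, tmul_smul]
      rw [← hd]
      abel
    exact hw0 (neg_eq_zero.mp (auxL hnm hzero))
  -- range of (B + lam) is contained in span {u}
  have hBr : ∀ y : V₂, ∃ r : ℂ, B y + lam • y = r • u := by
    intro y
    obtain ⟨d, hd⟩ := hspan2 v y
    rw [hTvy] at hd
    refine ⟨d, ?_⟩
    have hzero : v ⊗ₜ[ℂ] (B y + lam • y - d • u) = 0 := by
      rw [tmul_sub, hd, tmul_smul]
      abel
    exact sub_eq_zero.mp (tmul_eq_zero_left hv0 hzero)
  -- p = β • v with β ≠ 0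
  obtain ⟨β, hβ⟩ := Submodule.mem_span_singleton.mp (hAr x₀)
  rw [← hp] at hβ
  have hβ0 : β ≠ 0 := by
    rintro rfl
    rw [zero_smul] at hβ
    exact hp0 hβ.symm
  by_cases hc : lam + mu = 0
  · -- c = 0
    have hAv' : A v + mu • v = 0 := by
      rw [hAv, ← add_smul, hc, zero_smul]
    have hx₀v : x₀ ∉ Submodule.span ℂ ({v} : Set V₁) := by
      intro hmem
      obtain ⟨ξ, hξ⟩ := Submodule.mem_span_singleton.mp hmem
      apply hp0
      rw [hp, ← hξ, map_smul, smul_comm mu ξ, ← smul_add, hAv', smul_zero]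
    obtain ⟨d, hd⟩ := hspan2 x₀ y₀
    have hmu' : mu = -lam := by
      have := hc
      linear_combination this
    have hTx₀y₀ : T (x₀ ⊗ₜ[ℂ] y₀) = p ⊗ₜ[ℂ] y₀ + x₀ ⊗ₜ[ℂ] u := by
      rw [hT, hp, hu, hmu']
      simp only [add_tmul, tmul_add, tmul_smul, ← smul_tmul']
      module
    rw [hTx₀y₀] at hd
    have hzero : v ⊗ₜ[ℂ] (β • y₀ - d • u) + x₀ ⊗ₜ[ℂ] u = 0 := by
      have hbv : v ⊗ₜ[ℂ] (β • y₀) = p ⊗ₜ[ℂ] y₀ := by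
        rw [tmul_smul, smul_tmul', hβ]
      rw [tmul_sub, hbv, tmul_smul]
      rw [← hd]
      abel
    exact hu0 (auxL hx₀v hzero)
  · -- c ≠ 0
    -- kernel elements
    set C : V₁ →ₗ[ℂ] V₁ := (A : V₁ →ₗ[ℂ] V₁) + mu • LinearMap.id with hC
    have hCx : ∀ x, C x = A x + mu • x := by intro x; simp [hC]
    obtain ⟨x₁, hx₁0, hx₁⟩ := exists_ker hv0 h1 (by
      rintro _ ⟨x, rfl⟩
      rw [hCx]
      exact hAr x)
    rw [hCx] at hx₁
    set D : V₂ →ₗ[ℂ] V₂ := (B : V₂ →ₗ[ℂ] V₂) + lam • LinearMap.id with hD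
    have hDy : ∀ y, D y = B y + lam • y := by intro y; simp [hD]
    obtain ⟨y₁, hy₁0, hy₁⟩ := exists_ker hu0 h2 (by
      rintro _ ⟨y, rfl⟩
      rw [hDy]
      obtain ⟨r, hr⟩ := hBr y
      rw [hr]
      exact Submodule.smul_mem _ _ (Submodule.mem_span_singleton_self u))
    rw [hDy] at hy₁
    have hAx₁ : A x₁ = -(mu • x₁) := eq_neg_of_add_eq_zero_left hx₁
    have hBy₁ : B y₁ = -(lam • y₁) := eq_neg_of_add_eq_zero_left hy₁
    obtain ⟨d, hd⟩ := hspan2 x₁ y₁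
    have hcalc : T (x₁ ⊗ₜ[ℂ] y₁) = -((lam + mu) • (x₁ ⊗ₜ[ℂ] y₁)) := by
      rw [hT, hAx₁, hBy₁]
      simp only [neg_tmul, tmul_neg, tmul_smul, ← smul_tmul']
      module
    rw [hcalc] at hd
    have hzero : v ⊗ₜ[ℂ] (d • u) + x₁ ⊗ₜ[ℂ] ((lam + mu) • y₁) = 0 := by
      simp only [tmul_smul]
      rw [← hd]
      abel
    have hx₁v : x₁ ∈ Submodule.span ℂ ({v} : Set V₁) := by
      by_contra hnm
      have := auxL hnm hzero
      rcases smul_eq_zero.mp this with h' | h'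
      · exact hc h'
      · exact hy₁0 h'
    obtain ⟨ξ, hξ⟩ := Submodule.mem_span_singleton.mp hx₁v
    have hξ0 : ξ ≠ 0 := by
      rintro rfl
      rw [zero_smul] at hξ
      exact hx₁0 hξ.symm
    have hkey : A x₁ + mu • x₁ = ξ • ((lam + mu) • v) := by
      rw [← hξ, map_smul, hAv, smul_comm mu ξ v, ← smul_add, add_smul]
    have : ξ • ((lam + mu) • v) = 0 := by rw [← hkey, hx₁]
    rcases smul_eq_zero.mp this with h' | h'
    · exact hξ0 h'
    · rcases smul_eq_zero.mp h' with h'' | h''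
      · exact hc h''
      · exact hv0 h''
end

section
/- For n ≥ 2, define a bilinear form c on the Lie superalgebra sl(n|n) ⊂ gl(n|n) of supertraceless supermatrices by c(X, X') = tr(B C' + C B'), where X = (A B; C D) and X' = (A' B'; C' D') in block form. Then c is an even super-skew-symmetric 2-cocycle on sl(n|n): c(X,X') = −(−1)^{p(X)p(X')} c(X',X) for homogeneous X, X', the super 2-cocycle identity c([X,Y],Z) + (−1)^{p(X)(p(Y)+p(Z))} c([Y,Z],X) + (−1)^{p(Z)(p(X)+p(Y))} c([Z,X],Y) = 0 holds, and c(1_{2n}, X) = 0 for all X. Hence c descends to a 2-cocycle on psl(n|n) = sl(n|n)/ℂ·1_{2n}, defining the central extension 0 → ℂ → sl(n|n) → psl(n|n) → 0. -/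
/-- Parity of a row/column index of a supermatrix in the standard format. -/
def idxParity {m n : ℕ} : Fin m ⊕ Fin n → ZMod 2 :=
  fun i => match i with
  | .inl _ => 0
  | .inr _ => 1

/-- The sign `(-1)^a` for `a : ℤ/2`, as a complex number. -/
noncomputable def sgnC (a : ZMod 2) : ℂ := if a = 1 then -1 else 1

/-- A supermatrix is homogeneous of parity `ε`. -/
def IsHomog {n : ℕ} (ε : ZMod 2)
    (X : Matrix (Fin n ⊕ Fin n) (Fin n ⊕ Fin n) ℂ) : Prop :=
  ∀ i j, idxParity i + idxParity j ≠ ε → X i j = 0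

/-- The supertrace of a supermatrix `X = (A B; C D) ∈ gl(n|n)`: `str X = tr A − tr D`. -/
noncomputable def supertrace {n : ℕ}
    (X : Matrix (Fin n ⊕ Fin n) (Fin n ⊕ Fin n) ℂ) : ℂ :=
  (∑ i : Fin n, X (.inl i) (.inl i)) - ∑ j : Fin n, X (.inr j) (.inr j)

/-- The bilinear form `c(X, X') = tr(B C' + C B')` on `gl(n|n)`, for `X = (A B; C D)`
and `X' = (A' B'; C' D')`. -/
noncomputable def coc {n : ℕ}
    (X Y : Matrix (Fin n ⊕ Fin n) (Fin n ⊕ Fin n) ℂ) : ℂ :=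
  ∑ i : Fin n, ∑ j : Fin n,
    (X (.inl i) (.inr j) * Y (.inr j) (.inl i)
      + X (.inr i) (.inl j) * Y (.inl j) (.inr i))

section Aux
variable {n : ℕ} {a b : ZMod 2} {X Y W : Matrix (Fin n ⊕ Fin n) (Fin n ⊕ Fin n) ℂ}

lemma coc_symm (X Y : Matrix (Fin n ⊕ Fin n) (Fin n ⊕ Fin n) ℂ) : coc X Y = coc Y X := by
  simp only [coc]
  rw [Finset.sum_comm]
  exact Finset.sum_congr rfl fun i _ => Finset.sum_congr rfl fun j _ => by ring

lemma coc_evenl (h : IsHomog 0 X) (Y : Matrix (Fin n ⊕ Fin n) (Fin n ⊕ Fin n) ℂ) :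
    coc X Y = 0 := by
  have h1 : ∀ i j : Fin n, X (.inl i) (.inr j) = 0 := fun i j =>
    h _ _ (show (0 : ZMod 2) + 1 ≠ 0 by decide)
  have h2 : ∀ i j : Fin n, X (.inr i) (.inl j) = 0 := fun i j =>
    h _ _ (show (1 : ZMod 2) + 0 ≠ 0 by decide)
  simp [coc, h1, h2]

lemma coc_evenr (h : IsHomog 0 Y) (X : Matrix (Fin n ⊕ Fin n) (Fin n ⊕ Fin n) ℂ) :
    coc X Y = 0 := by rw [coc_symm]; exact coc_evenl h X

lemma IsHomog.mul (hX : IsHomog a X) (hY : IsHomog b Y) : IsHomog (a + b) (X * Y) := by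
  intro i j hij
  rw [Matrix.mul_apply]
  refine Finset.sum_eq_zero fun k _ => ?_
  by_cases h : idxParity i + idxParity k = a
  · have hb : idxParity k + idxParity j ≠ b := by
      intro hbeq
      apply hij
      have h2 : ∀ x : ZMod 2, x + x = 0 := by decide
      calc idxParity i + idxParity j
          = (idxParity i + idxParity k) + (idxParity k + idxParity j) := by
            linear_combination -h2 (idxParity k)
        _ = a + b := by rw [h, hbeq]
    rw [hY _ _ hb, mul_zero]
  · rw [hX _ _ h, zero_mul]

lemma bracket_homog (hX : IsHomog a X) (hY : IsHomog b Y) (s : ℂ) :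
    IsHomog (a + b) (X * Y - s • (Y * X)) := by
  intro i j hij
  have h1 := hX.mul hY i j hij
  have h2 := hY.mul hX i j (by rw [add_comm b a]; exact hij)
  simp [Matrix.sub_apply, h1, h2]

lemma coc_odd_trace (h : IsHomog 1 X) (Y : Matrix (Fin n ⊕ Fin n) (Fin n ⊕ Fin n) ℂ) :
    coc X Y = Matrix.trace (X * Y) := by
  have h1 : ∀ i j : Fin n, X (.inl i) (.inl j) = 0 := fun i j =>
    h _ _ (show (0 : ZMod 2) + 0 ≠ 1 by decide)
  have h2 : ∀ i j : Fin n, X (.inr i) (.inr j) = 0 := fun i j =>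
    h _ _ (show (1 : ZMod 2) + 1 ≠ 1 by decide)
  simp only [coc, Matrix.trace, Matrix.diag, Matrix.mul_apply, Fintype.sum_sum_type, h1, h2,
    Finset.sum_add_distrib, zero_mul, Finset.sum_const_zero, zero_add, add_zero]
  rw [add_comm]

end Aux

lemma sgnC_zero : sgnC 0 = 1 := by simp [sgnC]

lemma sgnC_one : sgnC 1 = -1 := by simp [sgnC]

/-- For `n ≥ 2`, the form `c(X,X') = tr(BC' + CB')` on the supertraceless matrices
`sl(n|n)` is an even, super-skew-symmetric 2-cocycle vanishing on the central element
`1₂ₙ`; hence it descends to `psl(n|n)` and defines the central extension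
`0 → ℂ → sl(n|n) → psl(n|n) → 0`.  Here `[X,Y] = XY − (−1)^{p(X)p(Y)} YX`. -/
theorem stmt19 {n : ℕ} (hn : 2 ≤ n) (a b c : ZMod 2)
    (X Y Z : Matrix (Fin n ⊕ Fin n) (Fin n ⊕ Fin n) ℂ)
    (hX : IsHomog a X) (hY : IsHomog b Y) (hZ : IsHomog c Z)
    (hXs : supertrace X = 0) (hYs : supertrace Y = 0) (hZs : supertrace Z = 0) :
    coc X Y = -(sgnC (a * b)) * coc Y X ∧
    (a + b = 1 → coc X Y = 0) ∧
    (coc (X * Y - sgnC (a * b) • (Y * X)) Z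
      + sgnC (a * (b + c)) * coc (Y * Z - sgnC (b * c) • (Z * Y)) X
      + sgnC (c * (a + b)) * coc (Z * X - sgnC (c * a) • (X * Z)) Y = 0) ∧
    coc (1 : Matrix (Fin n ⊕ Fin n) (Fin n ⊕ Fin n) ℂ) X = 0 := by
  have hcase : ∀ x : ZMod 2, x = 0 ∨ x = 1 := by decide
  have e2 : (1 + 1 : ZMod 2) = 0 := by decide
  refine ⟨?_, ?_, ?_, ?_⟩
  · -- super-skew-symmetry
    rcases hcase a with ha | ha <;> rcases hcase b with hb | hb <;> subst ha <;> subst hb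
    · rw [coc_evenl hX, coc_evenr hX]; simp [sgnC_zero]
    · rw [coc_evenl hX, coc_evenr hX]; simp [sgnC_zero]
    · rw [coc_evenr hY, coc_evenl hY]; simp [sgnC_zero]
    · rw [coc_symm X Y]
      simp only [mul_one, sgnC_one, neg_neg, one_mul]
  · -- evenness
    intro hab
    rcases hcase a with ha | ha <;> subst ha
    · exact coc_evenl hX Y
    · rcases hcase b with hb | hb <;> subst hb
      · exact coc_evenr hY X
      · exact absurd hab (by decide)
  · -- 2-cocycle identity
    rcases hcase a with ha | ha <;> rcases hcase b with hb | hb <;>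
      rcases hcase c with hc | hc <;> subst ha <;> subst hb <;> subst hc <;>
      simp only [e2, zero_mul, mul_zero, zero_add, add_zero, mul_one, one_mul,
        sgnC_zero, sgnC_one, one_smul, neg_one_smul, sub_neg_eq_add, neg_one_mul]
    · -- (0,0,0)
      have hB1 : IsHomog 0 (X * Y - Y * X) := by
        have h := bracket_homog hX hY 1
        simp only [one_smul, add_zero] at h; exact h
      have hB2 : IsHomog 0 (Y * Z - Z * Y) := by
        have h := bracket_homog hY hZ 1
        simp only [one_smul, add_zero] at h; exact h
      have hB3 : IsHomog 0 (Z * X - X * Z) := by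
        have h := bracket_homog hZ hX 1
        simp only [one_smul, add_zero] at h; exact h
      rw [coc_evenl hB1, coc_evenl hB2, coc_evenl hB3]; ring
    · -- (0,0,1)
      have hB1 : IsHomog 0 (X * Y - Y * X) := by
        have h := bracket_homog hX hY 1
        simp only [one_smul, add_zero] at h; exact h
      rw [coc_evenl hB1, coc_evenr hX, coc_evenr hY]; ring
    · -- (0,1,0)
      have hB3 : IsHomog 0 (Z * X - X * Z) := by
        have h := bracket_homog hZ hX 1
        simp only [one_smul, add_zero] at h; exact h
      rw [coc_evenr hZ, coc_evenr hX, coc_evenl hB3]; ring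
    · -- (0,1,1)
      have hB1 : IsHomog 1 (X * Y - Y * X) := by
        have h := bracket_homog hX hY 1
        simp only [one_smul, zero_add] at h; exact h
      have hB3 : IsHomog 1 (Z * X - X * Z) := by
        have h := bracket_homog hZ hX 1
        simp only [one_smul, add_zero] at h; exact h
      rw [coc_odd_trace hB1 Z, coc_odd_trace hB3 Y, coc_evenr hX]
      rw [sub_mul, sub_mul, Matrix.trace_sub, Matrix.trace_sub,
        Matrix.trace_mul_cycle X Y Z, Matrix.trace_mul_cycle X Z Y]
      ring
    · -- (1,0,0)
      have hB2 : IsHomog 0 (Y * Z - Z * Y) := by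
        have h := bracket_homog hY hZ 1
        simp only [one_smul, add_zero] at h; exact h
      rw [coc_evenr hZ, coc_evenl hB2, coc_evenr hY]; ring
    · -- (1,0,1)
      have hB1 : IsHomog 1 (X * Y - Y * X) := by
        have h := bracket_homog hX hY 1
        simp only [one_smul, add_zero] at h; exact h
      have hB2 : IsHomog 1 (Y * Z - Z * Y) := by
        have h := bracket_homog hY hZ 1
        simp only [one_smul, zero_add] at h; exact h
      have hB3 : IsHomog 0 (Z * X + X * Z) := by
        have h := bracket_homog hZ hX (-1)
        rw [e2] at h
        simp only [neg_one_smul, sub_neg_eq_add] at h; exact h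
      rw [coc_odd_trace hB1 Z, coc_odd_trace hB2 X, coc_evenl hB3]
      rw [sub_mul, sub_mul, Matrix.trace_sub, Matrix.trace_sub,
        Matrix.trace_mul_cycle Y Z X, Matrix.trace_mul_cycle Z Y X,
        Matrix.trace_mul_cycle X Z Y]
      ring
    · -- (1,1,0)
      have hB1 : IsHomog 0 (X * Y + Y * X) := by
        have h := bracket_homog hX hY (-1)
        rw [e2] at h
        simp only [neg_one_smul, sub_neg_eq_add] at h; exact h
      have hB2 : IsHomog 1 (Y * Z - Z * Y) := by
        have h := bracket_homog hY hZ 1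
        simp only [one_smul, add_zero] at h; exact h
      have hB3 : IsHomog 1 (Z * X - X * Z) := by
        have h := bracket_homog hZ hX 1
        simp only [one_smul, zero_add] at h; exact h
      rw [coc_evenl hB1, coc_odd_trace hB2 X, coc_odd_trace hB3 Y]
      rw [sub_mul, sub_mul, Matrix.trace_sub, Matrix.trace_sub,
        Matrix.trace_mul_cycle Z Y X, Matrix.trace_mul_cycle Z X Y,
        Matrix.trace_mul_cycle Y Z X]
      ring
    · -- (1,1,1)
      have hB1 : IsHomog 0 (X * Y + Y * X) := by
        have h := bracket_homog hX hY (-1)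
        rw [e2] at h
        simp only [neg_one_smul, sub_neg_eq_add] at h; exact h
      have hB2 : IsHomog 0 (Y * Z + Z * Y) := by
        have h := bracket_homog hY hZ (-1)
        rw [e2] at h
        simp only [neg_one_smul, sub_neg_eq_add] at h; exact h
      have hB3 : IsHomog 0 (Z * X + X * Z) := by
        have h := bracket_homog hZ hX (-1)
        rw [e2] at h
        simp only [neg_one_smul, sub_neg_eq_add] at h; exact h
      rw [coc_evenl hB1, coc_evenl hB2, coc_evenl hB3]; ring
  · -- vanishing on 1
    simp [coc, Matrix.one_apply]
end
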